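/- arXiv:2402.06040 — 5 statements merged into one kernel-verified Lean document; each statement's English description precedes it below -/
import Mathlib

section
/- The optimal tour cost is not submodular: in the Euclidean plane ℝ² with the Euclidean distance, there exist a depot o ∈ ℝ², finite sets A ⊆ B ⊆ ℝ², and a point x ∈ ℝ² with x ∉ B, such that T(o, B ∪ {x}) − T(o, B) > T(o, A ∪ {x}) − T(o, A). -/
noncomputable section

/-- Length of a walk through a list of points in a metric space. -/
def walkLen {X : Type*} [MetricSpace X] : List X → ℝ
  | [] => 0
  | [_] => 0
  | a :: b :: rest => dist a b + walkLen (b :: rest)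

/-- Closed-walk length `L(o; q₁, …, q_m)`: leave the depot `o`, visit the points
in order, and return to `o`.  For the empty sequence this is `dist o o = 0`. -/
def closedWalkLen {X : Type*} [MetricSpace X] (o : X) (l : List X) : ℝ :=
  walkLen (o :: l ++ [o])

/-- Optimal tour cost `T(o, P)`: the infimum of the closed-walk lengths over all
orderings (permutations) of the finite set `P`; `T(o, ∅) = 0`. -/
def optTourCost {X : Type*} [MetricSpace X] (o : X) (P : Finset X) : ℝ :=
  sInf (closedWalkLen o '' {l : List X | l.Perm P.toList})

open scoped Classical

open Finset

/-!
Put the depot at the centre of the square `[-1, 1]²`: every corner is at distance `√2` from it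
and distinct corners are at distance at least `2`. For the diagonal `A = {SW, NE}`, adding `SE`
turns the best tour `o-SW-NE-o` (cost `2√2 + √8`) into `o-SW-SE-NE-o` (cost `2√2 + 4`), a
marginal cost `4 - √8 < 2`. For `B = A ∪ {NW}`, the tour `o-NE-NW-SW-o` costs `2√2 + 4`, whereas
every tour through all four corners makes three corner-to-corner steps and costs at least
`2√2 + 6`, a marginal cost of at least `2`.
-/

section TourBounds

variable {X : Type*} [MetricSpace X]

theorem walkLen_nonneg : ∀ l : List X, 0 ≤ walkLen l
  | [] | [_] => le_rfl
  | _ :: b :: rest => add_nonneg dist_nonneg (walkLen_nonneg (b :: rest))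

theorem walkLen_cons_append_singleton (b : X) :
    ∀ (a : X) (l : List X),
      walkLen (a :: l ++ [b]) = walkLen (a :: l) + dist ((a :: l).getLast (by simp)) b
  | _, [] => by simp [walkLen]
  | a, c :: l => by
    have ih := walkLen_cons_append_singleton b c l
    simp only [List.cons_append, walkLen] at ih ⊢
    rw [ih, List.getLast_cons_cons]
    ring

theorem mul_length_le_walkLen {δ : ℝ} :
    ∀ (a : X) (l : List X), (a :: l).Pairwise (fun p q => δ ≤ dist p q) →
      l.length * δ ≤ walkLen (a :: l)
  | _, [], _ => by simp [walkLen]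
  | a, b :: l, h => by
    have hab : δ ≤ dist a b := List.rel_of_pairwise_cons h (by simp)
    have ih := mul_length_le_walkLen b l (List.Pairwise.of_cons h)
    simp only [walkLen, List.length_cons, Nat.cast_succ]
    linarith

theorem closedWalkLen_triple (o p q r : X) :
    closedWalkLen o [p, q, r] = dist o p + dist p q + dist q r + dist r o := by
  simp only [closedWalkLen, List.cons_append, List.nil_append, walkLen]; ring

theorem optTourCost_le_closedWalkLen [DecidableEq X] (o : X) {P : Finset X} {l : List X}
    (hl : l.Nodup) (hlP : l.toFinset = P) : optTourCost o P ≤ closedWalkLen o l :=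
  csInf_le ⟨0, by rintro _ ⟨l', -, rfl⟩; exact walkLen_nonneg _⟩
    ⟨l, hlP ▸ (List.toFinset_toList hl).symm, rfl⟩

/-- A tour leaves the depot once, returns once, and makes `#P - 1` steps between distinct points
of `P`. -/
theorem le_optTourCost_of_separated {o : X} {P : Finset X} (hP : P.Nonempty) {r δ : ℝ}
    (hr : ∀ p ∈ P, r ≤ dist o p) (hδ : ∀ p ∈ P, ∀ q ∈ P, p ≠ q → δ ≤ dist p q) :
    2 * r + ((P.card : ℝ) - 1) * δ ≤ optTourCost o P := by
  refine le_csInf ⟨_, P.toList, List.Perm.refl _, rfl⟩ ?_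
  rintro _ ⟨l, hl, rfl⟩
  have hmem : ∀ p ∈ l, p ∈ P := fun p hp => mem_toList.mp (hl.subset hp)
  obtain ⟨a, rest, rfl⟩ : ∃ a rest, l = a :: rest :=
    List.exists_cons_of_ne_nil <| List.ne_nil_of_length_pos <| by
      rw [hl.length_eq, length_toList]; exact hP.card_pos
  have hlen : (rest.length : ℝ) = P.card - 1 := by
    rw [← length_toList, ← hl.length_eq, List.length_cons]; push_cast; ring
  have hsteps := mul_length_le_walkLen a rest <|
    (hl.nodup_iff.mpr P.nodup_toList).pairwise_of_forall_ne
      fun p hp q hq => hδ p (hmem p hp) q (hmem q hq)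
  have hfirst := hr a (hmem a (by simp))
  have hlast := hr _ (hmem _ (List.getLast_mem (List.cons_ne_nil a rest)))
  rw [dist_comm] at hlast
  have hwalk : closedWalkLen o (a :: rest) =
      dist o a + walkLen (a :: rest) + dist ((a :: rest).getLast (by simp)) o := by
    change dist o a + walkLen (a :: rest ++ [o]) = _
    rw [walkLen_cons_append_singleton]; ring
  rw [hwalk, ← hlen]
  linarith

end TourBounds

theorem EuclideanSpace.dist_vec₂ (a b c d : ℝ) :
    dist (!₂[a, b] : EuclideanSpace ℝ (Fin 2)) !₂[c, d] = √((a - c) ^ 2 + (b - d) ^ 2) := by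
  simp [EuclideanSpace.dist_eq, Fin.sum_univ_two, Real.dist_eq, sq_abs]

namespace SquareExample

def center : EuclideanSpace ℝ (Fin 2) := !₂[0, 0]
def southWest : EuclideanSpace ℝ (Fin 2) := !₂[-1, -1]
def northEast : EuclideanSpace ℝ (Fin 2) := !₂[1, 1]
def northWest : EuclideanSpace ℝ (Fin 2) := !₂[-1, 1]
def southEast : EuclideanSpace ℝ (Fin 2) := !₂[1, -1]

abbrev corners : Finset (EuclideanSpace ℝ (Fin 2)) := {southEast, southWest, northEast, northWest}

theorem card_corners : corners.card = 4 := by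
  norm_num [corners, southEast, southWest, northEast, northWest]

theorem dist_center_corner : ∀ p ∈ corners, dist center p = √2 := by
  simp only [corners, mem_insert, mem_singleton]
  rintro p (rfl | rfl | rfl | rfl) <;>
    norm_num [center, southEast, southWest, northEast, northWest, EuclideanSpace.dist_vec₂]

theorem two_le_dist_corners : ∀ p ∈ corners, ∀ q ∈ corners, p ≠ q → 2 ≤ dist p q := by
  simp only [corners, mem_insert, mem_singleton]
  rintro p (rfl | rfl | rfl | rfl) q (rfl | rfl | rfl | rfl) hpq <;>
    first
    | exact absurd rfl hpq
    | norm_num [southEast, southWest, northEast, northWest, EuclideanSpace.dist_vec₂, Real.le_sqrt]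

theorem le_optTourCost_corners : 2 * √2 + 6 ≤ optTourCost center corners := by
  have h := le_optTourCost_of_separated ⟨southEast, by simp [corners]⟩
    (fun p hp => (dist_center_corner p hp).ge) two_le_dist_corners
  rw [card_corners] at h
  norm_num at h
  linarith

theorem le_optTourCost_diagonal : 2 * √2 + √8 ≤ optTourCost center {southWest, northEast} := by
  have hsub : {southWest, northEast} ⊆ corners := by simp [corners, Finset.subset_iff]
  have h := le_optTourCost_of_separated (δ := √8) (by simp)
    (fun p hp => (dist_center_corner p (hsub hp)).ge) (by
      simp only [mem_insert, mem_singleton]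
      rintro p (rfl | rfl) q (rfl | rfl) hpq <;>
        first
        | exact absurd rfl hpq
        | norm_num [southWest, northEast, EuclideanSpace.dist_vec₂])
  have hcard : ({southWest, northEast} : Finset (EuclideanSpace ℝ (Fin 2))).card = 2 := by
    norm_num [southWest, northEast]
  rw [hcard] at h
  norm_num at h
  linarith

theorem optTourCost_threeCorners_le :
    optTourCost center {southWest, northEast, northWest} ≤ 2 * √2 + 4 := by
  refine (optTourCost_le_closedWalkLen center (l := [northEast, northWest, southWest])
    (by norm_num [southWest, northEast, northWest]) (by ext; simp; tauto)).trans_eq ?_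
  rw [closedWalkLen_triple]
  norm_num [center, southWest, northEast, northWest, EuclideanSpace.dist_vec₂]
  ring

theorem optTourCost_insert_diagonal_le :
    optTourCost center (insert southEast {southWest, northEast}) ≤ 2 * √2 + 4 := by
  refine (optTourCost_le_closedWalkLen center (l := [southWest, southEast, northEast])
    (by norm_num [southWest, northEast, southEast]) (by ext; simp; tauto)).trans_eq ?_
  rw [closedWalkLen_triple]
  norm_num [center, southWest, northEast, southEast, EuclideanSpace.dist_vec₂]
  ring

end SquareExample

open SquareExample in
/-- Non-submodularity of the optimal tour cost in the Euclidean plane: there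
exist a depot `o`, finite sets `A ⊆ B` and a point `x ∉ B` such that the
marginal cost of adding `x` to `B` strictly exceeds that of adding `x` to `A`. -/
theorem optTourCost_not_submodular :
    ∃ (o : EuclideanSpace ℝ (Fin 2)) (A B : Finset (EuclideanSpace ℝ (Fin 2)))
      (x : EuclideanSpace ℝ (Fin 2)),
      A ⊆ B ∧ x ∉ B ∧
      optTourCost o (insert x B) - optTourCost o B >
        optTourCost o (insert x A) - optTourCost o A := by
  refine ⟨center, {southWest, northEast}, {southWest, northEast, northWest}, southEast,
    by simp [Finset.subset_iff], by norm_num [southWest, northEast, northWest, southEast], ?_⟩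
  have hxB := le_optTourCost_corners
  have hB := optTourCost_threeCorners_le
  have hxA := optTourCost_insert_diagonal_le
  have hA := le_optTourCost_diagonal
  have h8 : 2 < √8 := by norm_num [Real.lt_sqrt]
  linarith

end
end

section
/- Let V be a finite set, let f : V × V → ℝ and g : V → ℝ satisfy: (i) f(u, v) ≥ 0 and g(v) ≥ 0 for all u, v ∈ V; (ii) for every v ∈ V, g(v) + Σ_{u∈V} f(u, v) − Σ_{w∈V} f(v, w) = 1 (each vertex consumes one unit of flow); (iii) for every v ∈ V, there is at most one u ∈ V with f(u, v) > 0, and if g(v) > 0 then f(u, v) = 0 for all u ∈ V (unique parent). Then the positive-flow relation contains no directed cycle in V: there is no sequence v₀, v₁, …, v_m with m ≥ 1, v_m = v₀, and f(v_i, v_{i+1}) > 0 for all 0 ≤ i < m. -/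
/-- In the network-flow formulation, nonnegative flows in which every vertex
consumes one net unit of flow (`g v` being the external source inflow of `v`),
every vertex has at most one parent with positive inflow, and a vertex with
positive external inflow receives no other flow, admit no directed cycle of
positive-flow arcs. -/
theorem flow_no_positive_cycle {V : Type*} [Fintype V]
    (f : V → V → ℝ) (g : V → ℝ)
    (hf : ∀ u v : V, 0 ≤ f u v) (hg : ∀ v : V, 0 ≤ g v)
    (hbal : ∀ v : V, g v + (∑ u, f u v) - (∑ w, f v w) = 1)
    (huniq : ∀ v u₁ u₂ : V, 0 < f u₁ v → 0 < f u₂ v → u₁ = u₂)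
    (hgsrc : ∀ v : V, 0 < g v → ∀ u : V, f u v = 0) :
    ¬ ∃ (m : ℕ) (v : ℕ → V), 1 ≤ m ∧ v m = v 0 ∧
        ∀ i < m, 0 < f (v i) (v (i + 1)) := by
  rintro ⟨m, v, hm, hclose, hpos⟩
  have step : ∀ i < m, ∀ w, 1 + f (v (i+1)) w ≤ f (v i) (v (i+1)) := by
    intro i hi w
    have ha : 0 < f (v i) (v (i+1)) := hpos i hi
    have hgy : g (v (i+1)) = 0 := by
      by_contra h
      have := hgsrc (v (i+1)) (lt_of_le_of_ne (hg _) (Ne.symm h)) (v i)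
      linarith
    have hsum : (∑ u, f u (v (i+1))) = f (v i) (v (i+1)) := by
      apply Finset.sum_eq_single
      · intro u _ hu
        by_contra h
        exact hu (huniq (v (i+1)) u (v i) (lt_of_le_of_ne (hf u _) (Ne.symm h)) ha)
      · intro h; exact absurd (Finset.mem_univ _) h
    have hb := hbal (v (i+1))
    rw [hgy, hsum] at hb
    have hle : f (v (i+1)) w ≤ ∑ w', f (v (i+1)) w' :=
      Finset.single_le_sum (fun x _ => hf _ x) (Finset.mem_univ w)
    linarith
  have chain : ∀ i, i < m → f (v i) (v (i+1)) + i ≤ f (v 0) (v 1) := by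
    intro i
    induction i with
    | zero => intro _; simp
    | succ n ih =>
      intro hn
      have hnm : n < m := Nat.lt_of_succ_lt hn
      have h1 := step n hnm (v (n+2))
      have h2 := ih hnm
      push_cast
      linarith
  have h1 := step (m-1) (Nat.sub_lt hm Nat.one_pos) (v 1)
  rw [Nat.sub_add_cancel hm, hclose] at h1
  have h2 := chain (m-1) (Nat.sub_lt hm Nat.one_pos)
  rw [Nat.sub_add_cancel hm, hclose] at h2
  have h3 : (0:ℝ) ≤ ((m-1 : ℕ) : ℝ) := Nat.cast_nonneg _
  linarith
end

section
/- Let V and S be disjoint finite sets and W = V ∪ S, and let f : W × W → ℝ be a feasible districting flow, i.e.: (i) f(a, b) ≥ 0 for all a, b ∈ W; (ii) f(a, s) = 0 whenever s ∈ S; (iii) for every v ∈ V, Σ_{a∈W} f(a, v) − Σ_{b∈W} f(v, b) = 1; (iv) for every v ∈ V there is at most one a ∈ W with f(a, v) > 0. Then for every v ∈ V there exists a finite chain v = w₀, w₁, …, w_m with w_j ∈ V and f(w_{j+1}, w_j) > 0 for all 0 ≤ j < m, where w_m ∈ S: every basic unit's flow originates from a (unique) source. -/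
/-- In a feasible districting flow on `W = V ⊕ S` (nonnegative flow, no flow
into sources, every basic unit consumes one net unit of flow, and every basic
unit has at most one parent with positive inflow), the flow of every basic unit
originates from a source: there is a chain `v = w₀, w₁, …, w_m` with
`f(w_{j+1}, w_j) > 0` for all `j < m`, `w_j ∈ V` for `j < m`, and `w_m ∈ S`. -/
theorem flow_originates_from_source {V S : Type*} [Fintype V] [Fintype S]
    (f : (V ⊕ S) → (V ⊕ S) → ℝ)
    (hnonneg : ∀ a b : V ⊕ S, 0 ≤ f a b)
    (hnoSourceIn : ∀ (a : V ⊕ S) (s : S), f a (Sum.inr s) = 0)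
    (hbal : ∀ v : V, (∑ a, f a (Sum.inl v)) - (∑ b, f (Sum.inl v) b) = 1)
    (huniq : ∀ (v : V) (a₁ a₂ : V ⊕ S),
      0 < f a₁ (Sum.inl v) → 0 < f a₂ (Sum.inl v) → a₁ = a₂) :
    ∀ v : V, ∃ (m : ℕ) (w : ℕ → V ⊕ S),
      w 0 = Sum.inl v ∧
      (∀ j < m, 0 < f (w (j + 1)) (w j)) ∧
      (∀ j < m, ∃ u : V, w j = Sum.inl u) ∧
      (∃ s : S, w m = Sum.inr s) := by
  classical
  have hinflow : ∀ u : V, (1:ℝ) ≤ ∑ a, f a (Sum.inl u) := by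
    intro u
    have h1 := hbal u
    have h2 : (0:ℝ) ≤ ∑ b, f (Sum.inl u) b :=
      Finset.sum_nonneg (fun b _ => hnonneg _ _)
    linarith
  have hex : ∀ u : V, ∃ a, 0 < f a (Sum.inl u) := by
    intro u
    by_contra h
    push_neg at h
    have : (∑ a, f a (Sum.inl u)) ≤ 0 := Finset.sum_nonpos (fun a _ => h a)
    linarith [hinflow u]
  choose p hp using hex
  have hin_eq : ∀ u : V, (∑ a, f a (Sum.inl u)) = f (p u) (Sum.inl u) := by
    intro u
    apply Finset.sum_eq_single (p u)
    · intro a _ hne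
      by_contra h
      have hpos : 0 < f a (Sum.inl u) := lt_of_le_of_ne (hnonneg _ _) (Ne.symm h)
      exact hne (huniq u a (p u) hpos (hp u))
    · intro h; exact absurd (Finset.mem_univ _) h
  set g : V → ℝ := fun u => f (p u) (Sum.inl u) with hg
  have hstep : ∀ u u' : V, p u = Sum.inl u' → g u + 1 ≤ g u' := by
    intro u u' hpu
    have h1 : g u' = 1 + ∑ b, f (Sum.inl u') b := by
      have hb := hbal u'
      have he := hin_eq u'
      simp only [hg]
      linarith
    have h2 : f (Sum.inl u') (Sum.inl u) ≤ ∑ b, f (Sum.inl u') b :=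
      Finset.single_le_sum (f := fun b => f (Sum.inl u') b)
        (fun b _ => hnonneg _ _) (Finset.mem_univ (Sum.inl u))
    have h3 : g u = f (Sum.inl u') (Sum.inl u) := by
      simp only [hg, ← hpu]
    linarith
  intro v
  let w : ℕ → V ⊕ S := fun n => Nat.rec (Sum.inl v)
    (fun _ prev => Sum.elim p Sum.inr prev) n
  have hw0 : w 0 = Sum.inl v := rfl
  have hwsucc : ∀ n, w (n+1) = Sum.elim p Sum.inr (w n) := fun n => rfl
  have hreach : ∃ n, ∃ s : S, w n = Sum.inr s := by
    by_contra hno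
    push_neg at hno
    have hV : ∀ n, ∃ u : V, w n = Sum.inl u := by
      intro n
      cases hwn : w n with
      | inl u => exact ⟨u, rfl⟩
      | inr s => exact absurd hwn (hno n s)
    choose u hu using hV
    have hpu : ∀ n, p (u n) = Sum.inl (u (n+1)) := by
      intro n
      have := hwsucc n
      rw [hu n, hu (n+1)] at this
      simpa using this.symm
    have hmono : StrictMono (fun n => g (u n)) := by
      apply strictMono_nat_of_lt_succ
      intro n
      have := hstep (u n) (u (n+1)) (hpu n)
      linarith
    have hinj : Function.Injective u := by
      intro a b hab
      exact hmono.injective (by simp [hab])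
    obtain ⟨x, y, hxy, hmap⟩ := Finite.exists_ne_map_eq_of_infinite u
    exact hxy (hinj hmap)
  haveI hdec : DecidablePred fun n => ∃ s : S, w n = Sum.inr s := fun _ => Classical.dec _
  set m := Nat.find hreach with hm
  obtain ⟨s, hs⟩ := Nat.find_spec hreach
  refine ⟨m, w, hw0, ?_, ?_, ⟨s, hs⟩⟩
  · intro j hj
    have hjV : ∃ u : V, w j = Sum.inl u := by
      cases hwj : w j with
      | inl u => exact ⟨u, rfl⟩
      | inr s' => exact absurd ⟨s', hwj⟩ (Nat.find_min hreach hj)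
    obtain ⟨u, hu⟩ := hjV
    have : w (j+1) = p u := by rw [hwsucc, hu]; rfl
    rw [this, hu]
    exact hp u
  · intro j hj
    cases hwj : w j with
    | inl u => exact ⟨u, rfl⟩
    | inr s' => exact absurd ⟨s', hwj⟩ (Nat.find_min hreach hj)
end

section
/- Let V and S be disjoint finite sets, W = V ∪ S, and let f : W × W → ℝ be a feasible districting flow, i.e.: (i) f(a, b) ≥ 0 for all a, b ∈ W; (ii) f(a, s) = 0 whenever s ∈ S; (iii) for every v ∈ V, Σ_{a∈W} f(a, v) − Σ_{b∈W} f(v, b) = 1; (iv) for every v ∈ V there is at most one a ∈ W with f(a, v) > 0. For s ∈ S, let D_s = {v ∈ V : there is a finite chain v = w₀, …, w_m with f(w_{j+1}, w_j) > 0 for j < m and w_m = s}. Then for every s ∈ S, Σ_{v∈V} f(s, v) = |D_s|: the total flow supplied by each source equals the number of basic units in its district. Consequently, if the model constraints n_L ≤ Σ_{v∈V} f(s, v) ≤ n_U hold, then n_L ≤ |D_s| ≤ n_U. -/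
/-!
The district `D_s` is the set of units reachable from `s` along arcs of positive flow. It is
closed in both directions: the unique supplier of a unit of `D_s` is `s` or again a unit of `D_s`
(a chain cannot pass through a source, since no flow enters one), and every unit supplied by a
unit of `D_s` lies in `D_s`. Summing the balance constraints over `D_s`, the flow on arcs inside
`D_s` cancels, nothing leaves `D_s`, and only the arcs from `s` enter it; so `|D_s|` is the
total flow out of `s`.
-/

open Finset Relation

theorem Relation.reflTransGen_iff_exists_seq {α : Type*} {r : α → α → Prop} {a b : α} :
    ReflTransGen r a b ↔
      ∃ (m : ℕ) (w : ℕ → α), w 0 = a ∧ (∀ j < m, r (w j) (w (j + 1))) ∧ w m = b := by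
  constructor
  · intro h
    induction h with
    | refl => exact ⟨0, fun _ => a, rfl, by simp, rfl⟩
    | @tail c d _ hcd ih =>
      obtain ⟨m, w, hw0, hw, rfl⟩ := ih
      refine ⟨m + 1, Function.update w (m + 1) d, by simpa using hw0, fun j hj => ?_, by simp⟩
      rcases Nat.lt_succ_iff_lt_or_eq.mp hj with hj | rfl
      · rw [Function.update_of_ne (by omega), Function.update_of_ne (by omega)]
        exact hw j hj
      · simpa using hcd
  · rintro ⟨m, w, rfl, hw, rfl⟩
    have hseq : ReflTransGen (fun i j => r (w i) (w j)) 0 m :=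
      reflTransGen_of_succ_of_le _ (fun i hi => by simpa using hw i (Set.mem_Ico.mp hi).2) m.zero_le
    exact ReflTransGen.lift w (fun _ _ h => h) _ _ hseq

theorem Finset.sum_inflow_sub_outflow_eq_cut {W M : Type*} [Fintype W] [DecidableEq W]
    [AddCommGroup M] (f : W → W → M) (T : Finset W) :
    ∑ v ∈ T, (∑ a, f a v - ∑ b, f v b) =
      ∑ v ∈ T, ∑ a ∈ Tᶜ, f a v - ∑ v ∈ T, ∑ b ∈ Tᶜ, f v b := by
  simp only [← sum_add_sum_compl T, sum_sub_distrib, sum_add_distrib]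
  rw [sum_comm (s := T) (t := T) (f := fun v a => f a v)]
  abel

namespace Districting

variable {V S : Type*} {f : V ⊕ S → V ⊕ S → ℝ} {s : S}

def district (f : V ⊕ S → V ⊕ S → ℝ) (s : S) : Set V :=
  {v | ReflTransGen (fun a b => 0 < f a b) (.inr s) (.inl v)}

theorem mem_district_iff_exists_chain {v : V} :
    v ∈ district f s ↔ ∃ (m : ℕ) (w : ℕ → V ⊕ S),
      w 0 = .inl v ∧ (∀ j < m, 0 < f (w (j + 1)) (w j)) ∧ w m = .inr s := by
  rw [district, Set.mem_ofPred_eq, ← reflTransGen_swap, reflTransGen_iff_exists_seq]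

theorem mem_district_of_source_pos {v : V} (h : 0 < f (.inr s) (.inl v)) :
    v ∈ district f s :=
  ReflTransGen.single h

theorem mem_district_of_pos {v u : V} (hv : v ∈ district f s) (h : 0 < f (.inl v) (.inl u)) :
    u ∈ district f s :=
  ReflTransGen.tail hv h

theorem eq_source_or_mem_district_of_pos
    (hnoSourceIn : ∀ (a : V ⊕ S) (s : S), f a (.inr s) = 0)
    (huniq : ∀ (v : V) (a₁ a₂ : V ⊕ S), 0 < f a₁ (.inl v) → 0 < f a₂ (.inl v) → a₁ = a₂)
    {v : V} {a : V ⊕ S} (hv : v ∈ district f s) (ha : 0 < f a (.inl v)) :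
    a = .inr s ∨ ∃ u ∈ district f s, a = .inl u := by
  obtain h | ⟨c, hc, hcv⟩ := hv.cases_tail
  · cases h
  obtain rfl := huniq v a c ha hcv
  rcases a with u | s'
  · exact .inr ⟨u, hc, rfl⟩
  · obtain h | ⟨d, -, hd⟩ := hc.cases_tail
    · exact .inl h
    · exact absurd hd (by simp [hnoSourceIn])

theorem sum_source_flow_eq_ncard_district [Fintype V] [Fintype S]
    (hnonneg : ∀ a b : V ⊕ S, 0 ≤ f a b)
    (hnoSourceIn : ∀ (a : V ⊕ S) (s : S), f a (.inr s) = 0)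
    (hbal : ∀ v : V, (∑ a, f a (.inl v)) - (∑ b, f (.inl v) b) = 1)
    (huniq : ∀ (v : V) (a₁ a₂ : V ⊕ S), 0 < f a₁ (.inl v) → 0 < f a₂ (.inl v) → a₁ = a₂) :
    ∑ v, f (.inr s) (.inl v) = (district f s).ncard := by
  classical
  set D := (district f s).toFinset
  set T : Finset (V ⊕ S) := D.map .inl
  have hmemT : ∀ u, .inl u ∈ T ↔ u ∈ district f s := by simp [T, D]
  have hzero : ∀ {a b}, ¬ 0 < f a b → f a b = 0 := fun h =>
    le_antisymm (not_lt.mp h) (hnonneg _ _)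
  have hout : ∀ v ∈ D, ∑ b ∈ Tᶜ, f (.inl v) b = 0 := by
    intro v hv
    refine sum_eq_zero fun b hb => ?_
    rcases b with u | s'
    · exact hzero fun h =>
        mem_compl.mp hb ((hmemT u).mpr (mem_district_of_pos (Set.mem_toFinset.mp hv) h))
    · exact hnoSourceIn _ _
  have hin : ∀ v ∈ D, ∑ a ∈ Tᶜ, f a (.inl v) = f (.inr s) (.inl v) := by
    intro v hv
    refine sum_eq_single_of_mem _ (by simp [T]) fun a ha has => hzero fun h => ?_
    rcases eq_source_or_mem_district_of_pos hnoSourceIn huniq (Set.mem_toFinset.mp hv) h with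
      h | ⟨u, hu, rfl⟩
    · exact has h
    · exact mem_compl.mp ha ((hmemT u).mpr hu)
  have hsupp : ∑ v ∈ D, f (.inr s) (.inl v) = ∑ v, f (.inr s) (.inl v) :=
    sum_subset (subset_univ D) fun v _ hv =>
      hzero fun h => hv (Set.mem_toFinset.mpr (mem_district_of_source_pos h))
  have hcut := sum_inflow_sub_outflow_eq_cut f T
  simp only [T, sum_map, Function.Embedding.inl_apply, hbal, sum_const, nsmul_eq_mul, mul_one]
    at hcut
  rw [sum_congr rfl hin, sum_congr rfl hout, sum_const_zero, sub_zero, hsupp] at hcut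
  rw [← hcut, Set.ncard_eq_toFinset_card']

end Districting

/-- In a feasible districting flow on `W = V ⊕ S`, the total flow supplied by a
source `s` equals the number of basic units in its district
`D_s = {v : flow of v originates from s}`; consequently, if the model
constraints `n_L ≤ ∑_{v} f(s, v) ≤ n_U` hold then `n_L ≤ |D_s| ≤ n_U`. -/
theorem source_flow_eq_district_size {V S : Type*} [Fintype V] [Fintype S]
    (f : (V ⊕ S) → (V ⊕ S) → ℝ)
    (hnonneg : ∀ a b : V ⊕ S, 0 ≤ f a b)
    (hnoSourceIn : ∀ (a : V ⊕ S) (s : S), f a (Sum.inr s) = 0)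
    (hbal : ∀ v : V, (∑ a, f a (Sum.inl v)) - (∑ b, f (Sum.inl v) b) = 1)
    (huniq : ∀ (v : V) (a₁ a₂ : V ⊕ S),
      0 < f a₁ (Sum.inl v) → 0 < f a₂ (Sum.inl v) → a₁ = a₂)
    (s : S) :
    (∑ v : V, f (Sum.inr s) (Sum.inl v)) =
      ({v : V | ∃ (m : ℕ) (w : ℕ → V ⊕ S),
        w 0 = Sum.inl v ∧ (∀ j < m, 0 < f (w (j + 1)) (w j)) ∧
        w m = Sum.inr s} : Set V).ncard ∧
    ∀ nL nU : ℝ,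
      nL ≤ (∑ v : V, f (Sum.inr s) (Sum.inl v)) →
      (∑ v : V, f (Sum.inr s) (Sum.inl v)) ≤ nU →
      nL ≤ ({v : V | ∃ (m : ℕ) (w : ℕ → V ⊕ S),
          w 0 = Sum.inl v ∧ (∀ j < m, 0 < f (w (j + 1)) (w j)) ∧
          w m = Sum.inr s} : Set V).ncard ∧
        (({v : V | ∃ (m : ℕ) (w : ℕ → V ⊕ S),
          w 0 = Sum.inl v ∧ (∀ j < m, 0 < f (w (j + 1)) (w j)) ∧
          w m = Sum.inr s} : Set V).ncard : ℝ) ≤ nU := by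
  have hD : {v : V | ∃ (m : ℕ) (w : ℕ → V ⊕ S),
      w 0 = Sum.inl v ∧ (∀ j < m, 0 < f (w (j + 1)) (w j)) ∧ w m = Sum.inr s} =
      Districting.district f s :=
    Set.ext fun _ => Districting.mem_district_iff_exists_chain.symm
  have hsum : ∑ v, f (.inr s) (.inl v) = (Districting.district f s).ncard :=
    Districting.sum_source_flow_eq_ncard_district hnonneg hnoSourceIn hbal huniq
  rw [hD]
  exact ⟨hsum, fun nL nU hL hU => ⟨hsum ▸ hL, hsum ▸ hU⟩⟩
end

section
/- Let G be a simple graph on a finite vertex set V, let D ⊆ V be a nonempty set inducing a connected subgraph of G, let r ∈ D, and let s be a new source vertex not in V. Then there exists f : (D ∪ {s}) × (D ∪ {s}) → ℝ such that: (i) f ≥ 0 and f(a, s) = 0 for all a; (ii) f(u, v) > 0 with u, v ∈ D implies u and v are adjacent in G; (iii) f(s, v) > 0 implies v = r, and f(s, r) = |D|; (iv) every v ∈ D satisfies Σ_a f(a, v) − Σ_b f(v, b) = 1; (v) every v ∈ D has at most one a with f(a, v) > 0. In other words, every connected district admits a feasible flow in the network-flow formulation, with its source supplying exactly |D| units through a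 single root vertex r. -/
open Finset

/-- Auxiliary: for a connected graph on a fintype with a chosen root, there is a
parent function `pq` (rooted spanning tree) and a subtree-size function `t`. -/
lemma aux_tree {α : Type*} [Fintype α] [DecidableEq α]
    (H : SimpleGraph α) (hconn : H.Connected) (root : α) :
    ∃ (pq : α → α) (t : α → ℕ),
      (∀ v, v ≠ root → H.Adj v (pq v)) ∧
      (∀ v, t v = 1 + ∑ c ∈ univ.filter (fun c => pq c = v ∧ c ≠ root), t c) ∧
      t root = Fintype.card α := by
  classical
  -- for every non-root vertex there is a neighbour strictly closer to the root
  have key : ∀ v : α, v ≠ root → ∃ w, H.Adj v w ∧ H.dist w root + 1 = H.dist v root := by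
    intro v hv
    obtain ⟨p, hp⟩ := (hconn v root).exists_walk_length_eq_dist
    cases p with
    | nil => exact absurd rfl hv
    | cons h q =>
      rename_i w
      refine ⟨w, h, ?_⟩
      have h1 : H.dist w root ≤ q.length := SimpleGraph.dist_le q
      obtain ⟨q', hq'⟩ := (hconn w root).exists_walk_length_eq_dist
      have h2 : H.dist v root ≤ (SimpleGraph.Walk.cons h q').length := SimpleGraph.dist_le _
      simp only [SimpleGraph.Walk.length_cons] at hp h2
      omega
  set pq : α → α := fun v => if h : v = root then v else (key v h).choose with hpq_def
  have hpq_root : pq root = root := by simp [hpq_def]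
  have hpq_adj : ∀ v, (h : v ≠ root) → H.Adj v (pq v) := by
    intro v h
    have := (key v h).choose_spec
    simp only [hpq_def, dif_neg h]
    exact this.1
  have hpq_d : ∀ v, v ≠ root → H.dist (pq v) root + 1 = H.dist v root := by
    intro v h
    have := (key v h).choose_spec
    simp only [hpq_def, dif_neg h]
    exact this.2
  have dq_le : ∀ v, H.dist (pq v) root ≤ H.dist v root := by
    intro v
    by_cases h : v = root
    · subst h; rw [hpq_root]
    · have := hpq_d v h; omega
  have iter_le : ∀ (k : ℕ) (v : α), H.dist (pq^[k] v) root ≤ H.dist v root := by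
    intro k
    induction k with
    | zero => intro v; simp
    | succ n ih =>
      intro v
      rw [Function.iterate_succ_apply']
      exact (dq_le _).trans (ih v)
  have reach : ∀ (n : ℕ) (v : α), H.dist v root ≤ n → pq^[n] v = root := by
    intro n
    induction n with
    | zero =>
      intro v hv
      have h0 : H.dist v root = 0 := Nat.le_zero.mp hv
      have := ((hconn v root).dist_eq_zero_iff).mp h0
      simpa using this
    | succ n ih =>
      intro v hv
      by_cases h : v = root
      · rw [h, Function.iterate_succ_apply, hpq_root]
        exact ih root (by rw [SimpleGraph.dist_self]; exact Nat.zero_le n)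
      · have hd := hpq_d v h
        rw [Function.iterate_succ_apply]
        exact ih (pq v) (by omega)
  have anc_le : ∀ v u : α, (∃ k, pq^[k] u = v) → H.dist v root ≤ H.dist u root := by
    rintro v u ⟨k, rfl⟩; exact iter_le k u
  set t : α → ℕ := fun v => (univ.filter (fun u => ∃ k, pq^[k] u = v)).card with ht_def
  set children : α → Finset α := fun v => univ.filter (fun c => pq c = v ∧ c ≠ root)
    with hch_def
  have child_d : ∀ v c, c ∈ children v → H.dist v root < H.dist c root := by
    intro v c hc
    simp only [hch_def, mem_filter, mem_univ, true_and] at hc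
    have := hpq_d c hc.2
    rw [hc.1] at this
    omega
  -- chains through two distinct children of the same vertex are impossible
  have chain_eq : ∀ v, ∀ c₁ ∈ children v, ∀ c₂ ∈ children v,
      ∀ (u : α) (i j : ℕ), i ≤ j → pq^[i] u = c₁ → pq^[j] u = c₂ → c₁ = c₂ := by
    intro v c₁ hc₁ c₂ hc₂ u i j hij hi hj
    have hsum : pq^[j - i] c₁ = c₂ := by
      rw [← hi, ← Function.iterate_add_apply, Nat.sub_add_cancel hij, hj]
    rcases Nat.eq_zero_or_pos (j - i) with hm | hm
    · rw [hm] at hsum; simpa using hsum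
    · exfalso
      have hc₁' := hc₁
      simp only [hch_def, mem_filter, mem_univ, true_and] at hc₁'
      have hstep : pq^[j - i] c₁ = pq^[j - i - 1] (pq c₁) := by
        conv_lhs => rw [show j - i = (j - i - 1) + 1 by omega]
        rw [Function.iterate_succ_apply]
      rw [hstep, hc₁'.1] at hsum
      have h1 : H.dist c₂ root ≤ H.dist v root := anc_le _ _ ⟨j - i - 1, hsum⟩
      have h2 : H.dist v root < H.dist c₂ root := child_d v c₂ hc₂
      omega
  -- the partition lemma
  have hpart : ∀ v, univ.filter (fun u => ∃ k, pq^[k] u = v) =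
      insert v ((children v).biUnion (fun c => univ.filter (fun u => ∃ k, pq^[k] u = c))) := by
    intro v
    ext u
    simp only [mem_insert, mem_biUnion, mem_filter, mem_univ, true_and, hch_def]
    constructor
    · rintro h
      by_cases huv : u = v
      · exact Or.inl huv
      · right
        have hk := Nat.find_spec h
        set k := Nat.find h with hk_def
        have hk0 : k ≠ 0 := by
          intro h0
          rw [h0] at hk
          exact huv hk
        refine ⟨pq^[k - 1] u, ⟨?_, ?_⟩, k - 1, rfl⟩
        · rw [← Function.iterate_succ_apply' pq (k - 1) u, Nat.succ_eq_add_one,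
            Nat.sub_add_cancel (Nat.pos_of_ne_zero hk0)]
          exact hk
        · intro hr0
          have : pq^[k] u = root := by
            rw [show k = (k - 1) + 1 by omega, Function.iterate_succ_apply', hr0, hpq_root]
          have hv : v = root := by rw [← hk, this]
          have : pq^[k - 1] u = v := by rw [hr0, hv]
          exact Nat.find_min h (by omega) this
    · rintro (rfl | ⟨c, ⟨hc1, hc2⟩, k, hk⟩)
      · exact ⟨0, rfl⟩
      · exact ⟨k + 1, by rw [Function.iterate_succ_apply', hk, hc1]⟩
  have hnotmem : ∀ v, v ∉ (children v).biUnion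
      (fun c => univ.filter (fun u => ∃ k, pq^[k] u = c)) := by
    intro v hv
    simp only [mem_biUnion, mem_filter, mem_univ, true_and] at hv
    obtain ⟨c, hc, hanc⟩ := hv
    have h1 := anc_le c v hanc
    have h2 := child_d v c hc
    omega
  have hdisj : ∀ v, ∀ c₁ ∈ children v, ∀ c₂ ∈ children v, c₁ ≠ c₂ →
      Disjoint (univ.filter (fun u => ∃ k, pq^[k] u = c₁))
        (univ.filter (fun u => ∃ k, pq^[k] u = c₂)) := by
    intro v c₁ hc₁ c₂ hc₂ hne
    rw [Finset.disjoint_left]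
    intro u hu1 hu2
    simp only [mem_filter, mem_univ, true_and] at hu1 hu2
    obtain ⟨i, hi⟩ := hu1
    obtain ⟨j, hj⟩ := hu2
    rcases le_total i j with hij | hij
    · exact hne (chain_eq v c₁ hc₁ c₂ hc₂ u i j hij hi hj)
    · exact hne (chain_eq v c₂ hc₂ c₁ hc₁ u j i hij hj hi).symm
  refine ⟨pq, t, hpq_adj, ?_, ?_⟩
  · intro v
    rw [ht_def]
    simp only
    rw [hpart v, Finset.card_insert_of_notMem (hnotmem v),
      Finset.card_biUnion (hdisj v)]
    simp [ht_def, hch_def, add_comm]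
  · rw [ht_def]
    simp only
    have : univ.filter (fun u => ∃ k, pq^[k] u = root) = univ := by
      apply Finset.filter_true_of_mem
      intro u _
      exact ⟨H.dist u root, reach _ u le_rfl⟩
    rw [this, Finset.card_univ]

/-- Completeness of the network-flow formulation: every nonempty set `D` of
basic units inducing a connected subgraph of `G` admits a feasible flow on
`D ∪ {s}` (the source `s` being modelled by the extra `Unit` summand) whose
source supplies exactly `|D|` units through a single root vertex `r ∈ D`:
the flow is nonnegative, no flow enters the source, positive flow between basic
units follows edges of `G`, the source only feeds `r` with `f(s, r) = |D|`,
every basic unit consumes one net unit of flow, and every basic unit has at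
most one parent with positive inflow. -/
theorem connected_district_admits_flow {V : Type*} [Fintype V] [DecidableEq V]
    (G : SimpleGraph V) (D : Finset V) (hD : D.Nonempty)
    (hconn : (G.induce (D : Set V)).Connected)
    (r : V) (hr : r ∈ D) :
    ∃ f : (↥D ⊕ Unit) → (↥D ⊕ Unit) → ℝ,
      (∀ a b, 0 ≤ f a b) ∧
      (∀ a, f a (Sum.inr ()) = 0) ∧
      (∀ u v : ↥D, 0 < f (Sum.inl u) (Sum.inl v) → G.Adj (u : V) (v : V)) ∧
      (∀ v : ↥D, 0 < f (Sum.inr ()) (Sum.inl v) → (v : V) = r) ∧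
      f (Sum.inr ()) (Sum.inl ⟨r, hr⟩) = (D.card : ℝ) ∧
      (∀ v : ↥D, (∑ a, f a (Sum.inl v)) - (∑ b, f (Sum.inl v) b) = 1) ∧
      (∀ (v : ↥D) (a₁ a₂ : ↥D ⊕ Unit),
        0 < f a₁ (Sum.inl v) → 0 < f a₂ (Sum.inl v) → a₁ = a₂) := by
  classical
  set root : ↥D := ⟨r, hr⟩ with hroot_def
  obtain ⟨pq, t, hadj, hrec, hcard⟩ := aux_tree (G.induce (D : Set V)) hconn root
  set F : (↥D ⊕ Unit) → (↥D ⊕ Unit) → ℝ := fun a b =>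
    Sum.elim
      (fun v : ↥D => Sum.elim
        (fun u : ↥D => if pq v = u ∧ v ≠ root then (t v : ℝ) else 0)
        (fun _ => if v = root then (t v : ℝ) else 0) a)
      (fun _ => 0) b with hF_def
  refine ⟨F, ?_, ?_, ?_, ?_, ?_, ?_, ?_⟩
  · rintro (a | a) (b | b) <;> simp only [hF_def, Sum.elim_inl, Sum.elim_inr] <;> positivity
  · rintro (a | a) <;> simp [hF_def]
  · intro u v h
    simp only [hF_def, Sum.elim_inl] at h
    by_cases hc : pq v = u ∧ v ≠ root
    · have := hadj v hc.2
      rw [hc.1] at this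
      exact this.symm
    · rw [if_neg hc] at h; exact absurd h (lt_irrefl 0)
  · intro v h
    simp only [hF_def, Sum.elim_inl, Sum.elim_inr] at h
    by_cases hc : v = root
    · rw [hc]
    · rw [if_neg hc] at h; exact absurd h (lt_irrefl 0)
  · show F (Sum.inr ()) (Sum.inl root) = (D.card : ℝ)
    simp only [hF_def, Sum.elim_inl, Sum.elim_inr, if_pos rfl, hcard]
    simp [Finset.toFinset_coe]
  · intro v
    have hin : (∑ a : ↥D ⊕ Unit, F a (Sum.inl v)) = (t v : ℝ) := by
      rw [Fintype.sum_sum_type]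
      simp only [hF_def, Sum.elim_inl, Sum.elim_inr]
      by_cases hc : v = root
      · simp [hc]
      · simp only [hc, ne_eq, not_false_iff, and_true, if_false]
        rw [Finset.sum_ite_eq]
        simp
    have hout : (∑ b : ↥D ⊕ Unit, F (Sum.inl v) b) =
        ∑ c ∈ univ.filter (fun c => pq c = v ∧ c ≠ root), (t c : ℝ) := by
      rw [Fintype.sum_sum_type]
      simp [hF_def, Finset.sum_filter]
    rw [hin, hout]
    have hcast : (t v : ℝ)
        = 1 + ∑ c ∈ univ.filter (fun c => pq c = v ∧ c ≠ root), (t c : ℝ) := by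
      rw [hrec v]
      push_cast
      ring
    rw [hcast]
    ring
  · intro v a₁ a₂ h₁ h₂
    have extract : ∀ a : ↥D ⊕ Unit, 0 < F a (Sum.inl v) →
        a = (if v = root then Sum.inr () else Sum.inl (pq v)) := by
      rintro (a | a) h
      · simp only [hF_def, Sum.elim_inl] at h
        by_cases hc : pq v = a ∧ v ≠ root
        · rw [if_neg hc.2, hc.1]
        · rw [if_neg hc] at h; exact absurd h (lt_irrefl 0)
      · simp only [hF_def, Sum.elim_inl, Sum.elim_inr] at h
        by_cases hc : v = root
        · rw [if_pos hc]
        · rw [if_neg hc] at h; exact absurd h (lt_irrefl 0)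
    rw [extract a₁ h₁, extract a₂ h₂]
end
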